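/- Let 𝔐𝔅⁵ denote the class of all metric spaces X with at least 5 points such that for every three points x, y, z of X the equality 2·max{dist(x,y), dist(y,z), dist(z,x)} = dist(x,y) + dist(y,z) + dist(z,x) holds. Then the real line ℝ with its standard metric is a minimal 𝔐𝔅⁵-universal metric space; moreover, if X is 𝔐𝔅⁵-universal and X ∈ 𝔐𝔅⁵, or if X is any minimal 𝔐𝔅⁵-universal metric space, then X is isometric to ℝ. -/

import Mathlib

universe u v

open Function Set

/-- `f` is an isometric (distance-preserving) embedding of metric spaces. -/
def IsIsomEmb {X : Type u} {Y : Type v} [MetricSpace X] [MetricSpace Y] (f : X → Y) : Prop :=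
  ∀ a b : X, dist (f a) (f b) = dist a b

/-- `X` embeds isometrically into `Y`. -/
def IsomEmbeds (X : Type u) (Y : Type v) [MetricSpace X] [MetricSpace Y] : Prop :=
  ∃ f : X → Y, IsIsomEmb f

/-- `X` and `Y` are isometric. -/
def IsIsometricTo (X : Type u) (Y : Type v) [MetricSpace X] [MetricSpace Y] : Prop :=
  ∃ f : X → Y, IsIsomEmb f ∧ Surjective f

/-- Among every three points of `A`, one lies between the other two:
`2·max{d(x,y), d(y,z), d(z,x)} = d(x,y) + d(y,z) + d(z,x)` for all `x, y, z`. -/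
def MenBetween (A : Type u) [MetricSpace A] : Prop :=
  ∀ x y z : A,
    2 * max (dist x y) (max (dist y z) (dist z x)) = dist x y + dist y z + dist z x

/-- `A` belongs to the class `𝔐𝔅⁵`: it has at least 5 points and among every three of its
points one lies between the other two. -/
def MB5 (A : Type u) [MetricSpace A] : Prop :=
  5 ≤ Cardinal.mk A ∧ MenBetween A

/-- `Y` is universal for the class `𝔐𝔅⁵`. -/
def MB5Universal.{u', v'} (Y : Type v') [MetricSpace Y] : Prop :=
  ∀ (A : Type u') [MetricSpace A], MB5 A → IsomEmbeds A Y

/-- `Y` is minimal universal for the class `𝔐𝔅⁵`. -/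
def MB5MinUniversal.{u', v'} (Y : Type v') [MetricSpace Y] : Prop :=
  MB5Universal.{u', v'} Y ∧ ∀ S : Set Y, MB5Universal.{u'} ↥S → S = Set.univ

/-!
Fix `p ≠ q` in `A ∈ 𝔐𝔅⁵` and send `x` to `±d(p, x)`, with the minus sign exactly when `p` lies
between `x` and `q`. Betweenness in every triple makes this an isometric embedding into `ℝ`, unless
some four points form a pseudo-linear quadruple (a 4-cycle with sides `a, b, a, b` and both
diagonals `a + b`); but no fifth point can be placed consistently next to such a quadruple.

Conversely every `𝔐𝔅⁵`-universal space contains an isometric copy of `ℝ`, and an isometric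
self-embedding of `ℝ` is affine, hence onto. This makes `ℝ` minimal, makes the embedding of a
universal `X ∈ 𝔐𝔅⁵` into `ℝ` onto, and shows that in a minimal universal `X` the copy of `ℝ`,
being universal itself, is all of `X`.
-/

def OneIsSumOfOthers (u v w : ℝ) : Prop := u = v + w ∨ v = w + u ∨ w = u + v

theorem MenBetween.oneIsSumOfOthers {A : Type*} [MetricSpace A] (hm : MenBetween A) (x y z : A) :
    OneIsSumOfOthers (dist x y) (dist x z) (dist y z) := by
  have h := hm x y z
  rw [dist_comm z x] at h
  rcases max_choice (dist y z) (dist x z) with h₁ | h₁ <;>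
    rcases max_choice (dist x y) (max (dist y z) (dist x z)) with h₂ | h₂ <;>
    rw [h₂] at h <;> try rw [h₁] at h
  all_goals first
    | exact .inl (by linarith)
    | exact .inr (.inl (by linarith))
    | exact .inr (.inr (by linarith))

section PseudoLinearQuad

variable {A : Type*} [MetricSpace A]

def IsPseudoLinearQuad (x p y q : A) : Prop :=
  0 < dist p x ∧ 0 < dist p y ∧ dist y q = dist p x ∧ dist x q = dist p y ∧
    dist x y = dist p x + dist p y ∧ dist p q = dist p x + dist p y

/-- The six triangles through a fifth point at distances `α, β, γ, δ` from the vertices `x, y, p, q`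
of a pseudo-linear quadruple with sides `s, t`. -/
theorem false_of_fifth_point_triangles {s t α β γ δ : ℝ} (hs : 0 < s) (ht : 0 < t)
    (hα : 0 < α) (hβ : 0 < β) (hγ : 0 < γ) (hδ : 0 < δ)
    (hxp : OneIsSumOfOthers s γ α) (hpy : OneIsSumOfOthers t γ β)
    (hyq : OneIsSumOfOthers s β δ) (hqx : OneIsSumOfOthers t α δ)
    (hxy : OneIsSumOfOthers (s + t) α β) (hpq : OneIsSumOfOthers (s + t) γ δ) : False := by
  rcases hxy with h5 | h5 | h5 <;> rcases hpq with h6 | h6 | h6 <;>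
    rcases hxp with h1 | h1 | h1 <;> rcases hpy with h2 | h2 | h2 <;>
    rcases hyq with h3 | h3 | h3 <;> rcases hqx with h4 | h4 | h4 <;> linarith

theorem MenBetween.not_isPseudoLinearQuad (hm : MenBetween A) (h5 : 5 ≤ Cardinal.mk A)
    (x p y q : A) : ¬ IsPseudoLinearQuad x p y q := by
  rintro ⟨hs, ht, hyq, hxq, hxy, hpq⟩
  have h4 : ((4 : ℕ) : Cardinal) < Cardinal.mk A := lt_of_lt_of_le (by norm_num) h5
  obtain ⟨r, hr⟩ := Cardinal.exists_notMem_of_length_lt [x, p, y, q] h4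
  simp only [List.mem_cons, List.not_mem_nil, or_false, not_or] at hr
  obtain ⟨hrx, hrp, hry, hrq⟩ := hr
  have hpxr := hm.oneIsSumOfOthers p x r
  have hpyr := hm.oneIsSumOfOthers p y r
  have hyqr := hm.oneIsSumOfOthers y q r
  have hxqr := hm.oneIsSumOfOthers x q r
  have hxyr := hm.oneIsSumOfOthers x y r
  have hpqr := hm.oneIsSumOfOthers p q r
  rw [dist_comm p r, dist_comm x r] at hpxr
  rw [dist_comm p r, dist_comm y r] at hpyr
  rw [hyq, dist_comm y r, dist_comm q r] at hyqr
  rw [hxq, dist_comm x r, dist_comm q r] at hxqr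
  rw [hxy, dist_comm x r, dist_comm y r] at hxyr
  rw [hpq, dist_comm p r, dist_comm q r] at hpqr
  exact false_of_fifth_point_triangles hs ht (dist_pos.2 hrx) (dist_pos.2 hry)
    (dist_pos.2 hrp) (dist_pos.2 hrq) hpxr hpyr hyqr hxqr hxyr hpqr

end PseudoLinearQuad

section SignedDist

variable {A : Type*} [MetricSpace A]

open Classical in
noncomputable def signedDistToward (p q x : A) : ℝ :=
  if dist x q = dist p x + dist p q then -dist p x else dist p x

variable {p q x y : A}

theorem MenBetween.dist_eq_of_not_between (hm : MenBetween A)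
    (hx : dist x q ≠ dist p x + dist p q) :
    dist x q = dist p q - dist p x ∨ dist x q = dist p x - dist p q := by
  rcases hm.oneIsSumOfOthers p x q with h | h | h
  · exact .inr (by linarith)
  · exact .inl (by linarith)
  · exact absurd (by linarith) hx

theorem MenBetween.dist_eq_of_between_between (hm : MenBetween A) (hpq : p ≠ q)
    (hx : dist x q = dist p x + dist p q) (hy : dist y q = dist p y + dist p q) :
    dist x y = |dist p x - dist p y| := by
  have hk := dist_pos.2 hpq
  rw [eq_comm, abs_eq dist_nonneg]
  rcases hm.oneIsSumOfOthers p x y with h | h | h <;>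
    rcases hm.oneIsSumOfOthers x y q with h' | h' | h' <;>
    first
      | exact .inl (by linarith)
      | exact .inr (by linarith)

theorem MenBetween.dist_eq_of_not_between_not_between (hm : MenBetween A)
    (hquad : ∀ x p y q : A, ¬ IsPseudoLinearQuad x p y q) (hpq : p ≠ q)
    (hxp : x ≠ p) (hyp : y ≠ p)
    (hx : dist x q ≠ dist p x + dist p q) (hy : dist y q ≠ dist p y + dist p q) :
    dist x y = |dist p x - dist p y| := by
  have hk := dist_pos.2 hpq
  have ha := dist_pos.2 hxp.symm
  have hb := dist_pos.2 hyp.symm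
  have hu₀ := dist_nonneg (x := x) (y := q)
  have hv₀ := dist_nonneg (x := y) (y := q)
  rw [eq_comm, abs_eq dist_nonneg]
  rcases hm.dist_eq_of_not_between hx with hu | hu <;>
    rcases hm.dist_eq_of_not_between hy with hv | hv <;>
    rcases hm.oneIsSumOfOthers p x y with h | h | h <;>
    rcases hm.oneIsSumOfOthers x y q with h' | h' | h' <;>
    first
      | exact .inl (by linarith)
      | exact .inr (by linarith)
      | exact (hquad x p y q ⟨ha, hb, by linarith, by linarith, by linarith, by linarith⟩).elim

theorem MenBetween.dist_eq_of_not_between_between (hm : MenBetween A)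
    (hquad : ∀ x p y q : A, ¬ IsPseudoLinearQuad x p y q) (hpq : p ≠ q) (hyp : y ≠ p)
    (hx : dist x q ≠ dist p x + dist p q) (hy : dist y q = dist p y + dist p q) :
    dist x y = dist p x + dist p y := by
  have hk := dist_pos.2 hpq
  have hb := dist_pos.2 hyp.symm
  have hc₀ := dist_nonneg (x := x) (y := y)
  have hu₀ := dist_nonneg (x := x) (y := q)
  rcases hm.dist_eq_of_not_between hx with hu | hu <;>
    rcases hm.oneIsSumOfOthers p x y with h | h | h <;>
    rcases hm.oneIsSumOfOthers x y q with h' | h' | h' <;>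
    first
      | linarith
      | exact (hquad y p q x ⟨hb, hk, by rw [dist_comm]; linarith, by rw [dist_comm]; linarith,
          hy, by linarith⟩).elim

theorem signedDistToward_self (p q : A) : signedDistToward p q p = 0 := by
  simp [signedDistToward]

theorem abs_signedDistToward (p q x : A) : |signedDistToward p q x| = dist p x := by
  unfold signedDistToward
  split_ifs <;> simp

theorem MenBetween.isometry_signedDistToward (hm : MenBetween A)
    (hquad : ∀ x p y q : A, ¬ IsPseudoLinearQuad x p y q) (hpq : p ≠ q) :
    Isometry (signedDistToward p q) := by
  refine Isometry.of_dist_eq fun x y => ?_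
  rcases eq_or_ne x p with rfl | hxp
  · rw [Real.dist_eq, signedDistToward_self, zero_sub, abs_neg, abs_signedDistToward]
  rcases eq_or_ne y p with rfl | hyp
  · rw [Real.dist_eq, signedDistToward_self, sub_zero, abs_signedDistToward, dist_comm]
  rw [Real.dist_eq]
  unfold signedDistToward
  split_ifs with hx hy hy
  · rw [neg_sub_neg, abs_sub_comm, hm.dist_eq_of_between_between hpq hx hy]
  · rw [dist_comm x y, hm.dist_eq_of_not_between_between hquad hpq hxp hy hx, ← neg_add',
      abs_neg, abs_of_nonneg (by positivity), add_comm]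
  · rw [hm.dist_eq_of_not_between_between hquad hpq hyp hx hy, sub_neg_eq_add,
      abs_of_nonneg (by positivity)]
  · rw [hm.dist_eq_of_not_between_not_between hquad hpq hxp hyp hx hy]

end SignedDist

theorem MB5.exists_isometry_real {A : Type*} [MetricSpace A] (hA : MB5 A) :
    ∃ f : A → ℝ, Isometry f := by
  obtain ⟨h5, hm⟩ := hA
  have : Nontrivial A := Cardinal.one_lt_iff_nontrivial.1 (lt_of_lt_of_le (by norm_num) h5)
  obtain ⟨p, q, hpq⟩ := exists_pair_ne A
  exact ⟨_, hm.isometry_signedDistToward (hm.not_isPseudoLinearQuad h5) hpq⟩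

theorem mb5Universal_real : MB5Universal.{u} ℝ := fun _ _ hA =>
  let ⟨f, hf⟩ := hA.exists_isometry_real
  ⟨f, hf.dist_eq⟩

theorem menBetween_real : MenBetween ℝ := by
  intro x y z
  simp only [Real.dist_eq, max_def]
  split_ifs <;>
    rcases abs_cases (x - y) with ⟨h1, h1'⟩ | ⟨h1, h1'⟩ <;>
    rcases abs_cases (y - z) with ⟨h2, h2'⟩ | ⟨h2, h2'⟩ <;>
    rcases abs_cases (z - x) with ⟨h3, h3'⟩ | ⟨h3, h3'⟩ <;>
    linarith

theorem mb5_uLift_real : MB5 (ULift.{u} ℝ) := by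
  refine ⟨?_, fun x y z => menBetween_real x.down y.down z.down⟩
  rw [Cardinal.mk_uLift, Cardinal.mk_real, Cardinal.lift_continuum]
  exact_mod_cast (Cardinal.nat_lt_continuum 5).le

theorem MB5Universal.exists_isometry_real {Y : Type*} [MetricSpace Y]
    (hY : MB5Universal.{u} Y) : ∃ g : ℝ → Y, Isometry g := by
  obtain ⟨g, hg⟩ := hY (ULift.{u} ℝ) mb5_uLift_real
  exact ⟨g ∘ ULift.up, Isometry.of_dist_eq fun a b => hg _ _⟩

theorem MB5Universal.range_of_isometry {Z Y : Type*} [MetricSpace Z] [MetricSpace Y]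
    (hZ : MB5Universal.{u} Z) {g : Z → Y} (hg : Isometry g) : MB5Universal.{u} (range g) :=
  fun A _ hA =>
    let ⟨f, hf⟩ := hZ A hA
    ⟨rangeFactorization g ∘ f, fun a b => (hg.dist_eq _ _).trans (hf a b)⟩

theorem Isometry.sq_sub_real {f : ℝ → ℝ} (hf : Isometry f) (a b : ℝ) :
    (f a - f b) ^ 2 = (a - b) ^ 2 := by
  rw [← sq_abs, ← Real.dist_eq, hf.dist_eq, Real.dist_eq, sq_abs]

theorem Isometry.real_eq_affine {f : ℝ → ℝ} (hf : Isometry f) (x : ℝ) :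
    f x = f 0 + (f 1 - f 0) * x := by
  linear_combination (-(f x - f 0)) * hf.sq_sub_real 1 0 +
    (f 1 - f 0) / 2 * (hf.sq_sub_real x 0 + hf.sq_sub_real 1 0 - hf.sq_sub_real x 1)

theorem Isometry.real_surjective {f : ℝ → ℝ} (hf : Isometry f) : Surjective f := by
  intro t
  refine ⟨(t - f 0) * (f 1 - f 0), ?_⟩
  have hunit : (f 1 - f 0) ^ 2 = 1 := by simpa using hf.sq_sub_real 1 0
  rw [hf.real_eq_affine]
  linear_combination (t - f 0) * hunit

theorem isIsometricTo_of_isometry_surjective {X Y : Type*} [MetricSpace X] [MetricSpace Y]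
    {g : Y → X} (hg : Isometry g) (hs : Surjective g) : IsIsometricTo X Y := by
  let e : Y ≃ᵢ X := ⟨Equiv.ofBijective g ⟨hg.injective, hs⟩, hg⟩
  exact ⟨e.symm, e.symm.isometry.dist_eq, e.symm.surjective⟩

/-- The real line is a minimal `𝔐𝔅⁵`-universal metric space; moreover every
`𝔐𝔅⁵`-universal member of `𝔐𝔅⁵` and every minimal `𝔐𝔅⁵`-universal metric space is
isometric to `ℝ`. -/
theorem statement16 :
    MB5MinUniversal.{u} ℝ ∧
    ∀ (X : Type v) [MetricSpace X],
      ((MB5Universal.{u} X ∧ MB5 X) ∨ MB5MinUniversal.{u} X) →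
      IsIsometricTo X ℝ := by
  refine ⟨⟨mb5Universal_real, fun S hS => ?_⟩, fun X _ hX => ?_⟩
  · obtain ⟨g, hg⟩ := hS.exists_isometry_real
    refine eq_univ_of_forall fun t => ?_
    obtain ⟨r, rfl⟩ := (isometry_subtype_coe.comp hg).real_surjective t
    exact (g r).2
  rcases hX with ⟨hu, hX⟩ | ⟨hu, hmin⟩
  · obtain ⟨f, hf⟩ := hX.exists_isometry_real
    obtain ⟨g, hg⟩ := hu.exists_isometry_real
    exact ⟨f, hf.dist_eq, (hf.comp hg).real_surjective.of_comp⟩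
  · obtain ⟨g, hg⟩ := hu.exists_isometry_real
    have hrange := hmin _ (mb5Universal_real.range_of_isometry hg)
    exact isIsometricTo_of_isometry_surjective hg (range_eq_univ.1 hrange)
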